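/- Let d, k, m, t be positive integers, let c > 0 and ε > 0, and let x ∈ ℝ_{d,k,c}. Suppose m ≥ 4e²·(k + 2/ε), and h_1, …, h_t : [d] → [m] are drawn independently, each from a pairwise independent distribution. Then for every index i ∈ [d], the probability that DecMed(Sk_{h_{1:t}}(x), i) ∉ [x_i − ε·c, x_i + ε·c] is at most e^{−t}. -/

import Mathlib

open MeasureTheory Finset
open scoped ENNReal NNReal BigOperators

/-- The count-min style sketch of `x` under hash function `h`:
`(Sk h x) l = ∑_{i : h i = l} x i`. -/
noncomputable def Sk {d m : ℕ} (h : Fin d → Fin m) (x : Fin d → ℝ) : Fin m → ℝ :=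
  fun l => ∑ i ∈ Finset.univ.filter (fun i => h i = l), x i

/-- `Dec (y, i; h) = y (h i)`. -/
def Dec {d m : ℕ} (y : Fin m → ℝ) (i : Fin d) (h : Fin d → Fin m) : ℝ := y (h i)

open Classical in
/-- `DecMed` of the sketch matrix: the `⌈(t+1)/2⌉`-th smallest (i.e. the entry at
0-based position `t/2` of the increasingly sorted list) of the `t` decodings. -/
noncomputable def DecMed {d m t : ℕ} (h : Fin t → Fin d → Fin m) (x : Fin d → ℝ)
    (i : Fin d) : ℝ :=
  (((List.ofFn fun j : Fin t => Dec (Sk (h j) x) i (h j)).mergeSort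
      (fun a b => decide (a ≤ b))).getD (t / 2) 0)

/-- A distribution over hash functions `[d] → [m]` is pairwise independent if
for all `i ≠ i'` and all buckets `a, b`, `Pr[h i = a ∧ h i' = b] = 1/m²`. -/
def PairwiseIndepHash {d m : ℕ} (μ : Measure (Fin d → Fin m)) : Prop :=
  ∀ i i' : Fin d, i ≠ i' → ∀ a b : Fin m,
    μ {h | h i = a ∧ h i' = b} = 1 / (m : ℝ≥0∞) ^ 2

/-- `x` has an `ℓ₁` tail bound: `‖tail_k(x)‖₁ ≤ c`, i.e. some `k`-sparse vector
`y` satisfies `‖x - y‖₁ ≤ c`. -/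
def TailBound {d : ℕ} (k : ℕ) (c : ℝ) (x : Fin d → ℝ) : Prop :=
  ∃ y : Fin d → ℝ, {i | y i ≠ 0}.ncard ≤ k ∧ (∑ i, |x i - y i|) ≤ c

lemma countP_ofFn' {α : Type*} : ∀ {n : ℕ} (f : Fin n → α) (p : α → Bool),
    (List.ofFn f).countP p = ∑ j : Fin n, if p (f j) then 1 else 0
  | 0, f, p => by simp
  | (n+1), f, p => by
    rw [List.ofFn_succ, List.countP_cons, Fin.sum_univ_succ, countP_ofFn']
    by_cases h : p (f 0) <;> simp [h, add_comm]

lemma card_filter_eq_countP_ofFn {α : Type*} {n : ℕ} (f : Fin n → α) (p : α → Bool) :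
    (Finset.univ.filter (fun j => p (f j) = true)).card = (List.ofFn f).countP p := by
  rw [countP_ofFn', Finset.card_filter]

lemma measure_eq_sum_singleton' {α : Type*} [Fintype α] [MeasurableSpace α]
    [MeasurableSingletonClass α] (ν : Measure α) (S : Set α) [DecidablePred (· ∈ S)] :
    ν S = ∑ a ∈ Finset.univ.filter (· ∈ S), ν {a} := by
  have h1 : S = ⋃ a ∈ Finset.univ.filter (· ∈ S), ({a} : Set α) := by
    ext z; simp
  conv_lhs => rw [h1]
  rw [measure_biUnion_finset]
  · intro p _ q _ hpq
    simp [Function.onFun, Set.disjoint_singleton, hpq]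
  · intro b _; exact measurableSet_singleton b

lemma collision_prob {d m : ℕ} (hm0 : 0 < m) (ν : Measure (Fin d → Fin m))
    (hpair : PairwiseIndepHash ν) {i i' : Fin d} (hne : i' ≠ i) :
    ν {h | h i' = h i} = 1 / (m : ℝ≥0∞) := by
  classical
  have h1 : {h : Fin d → Fin m | h i' = h i}
      = ⋃ v ∈ (Finset.univ : Finset (Fin m)), {h | h i = v ∧ h i' = v} := by
    ext h
    simp only [Set.mem_setOf_eq, Set.mem_iUnion, Finset.mem_univ, exists_true_left,
      exists_prop, true_and]
    exact ⟨fun hh => ⟨h i, rfl, hh⟩, fun ⟨v, h1, h2⟩ => h2.trans h1.symm⟩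
  rw [h1, measure_biUnion_finset]
  · rw [Finset.sum_congr rfl (fun v _ => hpair i i' (Ne.symm hne) v v)]
    rw [Finset.sum_const, Finset.card_univ, Fintype.card_fin, nsmul_eq_mul]
    have hm' : (m : ℝ≥0∞) ≠ 0 := Nat.cast_ne_zero.2 hm0.ne'
    have hmt : (m : ℝ≥0∞) ≠ ⊤ := ENNReal.natCast_ne_top m
    rw [pow_two, one_div, one_div, ENNReal.mul_inv (Or.inl hm') (Or.inl hmt),
      ← mul_assoc, ENNReal.mul_inv_cancel hm' hmt, one_mul]
  · intro p _ q _ hpq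
    simp only [Function.onFun]
    refine Set.disjoint_left.2 fun h hh1 hh2 => hpq ?_
    exact hh1.1.symm.trans hh2.1
  · intro b _
    exact (Set.to_countable _).measurableSet

lemma measure_setOf_eq_sum {α : Type*} [Fintype α] [MeasurableSpace α]
    [MeasurableSingletonClass α] (ν : Measure α) (p : α → Prop) [DecidablePred p] :
    ν {a | p a} = ∑ a ∈ Finset.univ.filter p, ν {a} := by
  have h1 : {a | p a} = ⋃ a ∈ Finset.univ.filter p, ({a} : Set α) := by
    ext z; simp
  rw [h1, measure_biUnion_finset]
  · intro p _ q _ hpq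
    simp [Function.onFun, Set.disjoint_singleton, hpq]
  · intro b _; exact measurableSet_singleton b

open Classical in
lemma perhash {d k m : ℕ} (hm0 : 0 < m) (c ε : ℝ) (hc : 0 < c) (hε : 0 < ε)
    (x y : Fin d → ℝ) (hycard : {i | y i ≠ 0}.ncard ≤ k) (hyl1 : (∑ i, |x i - y i|) ≤ c)
    (ν : Measure (Fin d → Fin m)) [IsProbabilityMeasure ν] (hpair : PairwiseIndepHash ν)
    (i : Fin d) :
    ν {h | Dec (Sk h x) i h ∉ Set.Icc (x i - ε * c) (x i + ε * c)}
      ≤ ENNReal.ofReal (((k : ℝ) + 2 / ε) / m) := by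
  have hεc : 0 < ε * c := mul_pos hε hc
  -- error decomposition
  have hdec : ∀ h : Fin d → Fin m, Dec (Sk h x) i h =
      x i + ∑ i' ∈ (Finset.univ.erase i).filter (fun i' => h i' = h i), x i' := by
    intro h
    have hsplit : Finset.univ.filter (fun i' => h i' = h i)
        = insert i ((Finset.univ.erase i).filter (fun i' => h i' = h i)) := by
      ext j; by_cases hj : j = i <;> simp [hj]
    rw [Dec, Sk, hsplit, Finset.sum_insert (by simp)]
  set T : (Fin d → Fin m) → ℝ :=
    fun h => ∑ i' ∈ Finset.univ.erase i, |x i' - y i'| * (if h i' = h i then 1 else 0)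
    with hT
  -- inclusion into head-collision union tail-Markov events
  have hsub : {h | Dec (Sk h x) i h ∉ Set.Icc (x i - ε * c) (x i + ε * c)} ⊆
      (⋃ i' ∈ (Finset.univ.erase i).filter (fun i' => y i' ≠ 0), {h : Fin d → Fin m | h i' = h i})
      ∪ {h | ε * c < T h} := by
    intro h hh
    simp only [Set.mem_setOf_eq] at hh
    by_cases h1 : h ∈ ⋃ i' ∈ (Finset.univ.erase i).filter (fun i' => y i' ≠ 0),
        {h : Fin d → Fin m | h i' = h i}
    · exact Or.inl h1
    by_cases h2 : ε * c < T h
    · exact Or.inr h2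
    exfalso
    have hc2 : T h ≤ ε * c := not_lt.mp h2
    have hcol : ∀ i' ∈ (Finset.univ.erase i).filter (fun i' => h i' = h i), y i' = 0 := by
      intro i' hi'
      simp only [Finset.mem_filter, Finset.mem_erase, Finset.mem_univ, true_and, and_true] at hi'
      by_contra hy0
      exact h1 (Set.mem_iUnion₂.2 ⟨i', Finset.mem_filter.2
        ⟨Finset.mem_erase.2 ⟨hi'.1, Finset.mem_univ i'⟩, hy0⟩, hi'.2⟩)
    have habs : |∑ i' ∈ (Finset.univ.erase i).filter (fun i' => h i' = h i), x i'| ≤ T h := by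
      calc |∑ i' ∈ (Finset.univ.erase i).filter (fun i' => h i' = h i), x i'|
          ≤ ∑ i' ∈ (Finset.univ.erase i).filter (fun i' => h i' = h i), |x i'| :=
            Finset.abs_sum_le_sum_abs _ _
        _ = ∑ i' ∈ (Finset.univ.erase i).filter (fun i' => h i' = h i), |x i' - y i'| := by
            refine Finset.sum_congr rfl fun i' hi' => ?_
            rw [hcol i' hi', sub_zero]
        _ = T h := by
            rw [hT, Finset.sum_filter]
            refine Finset.sum_congr rfl fun i' _ => ?_
            by_cases hcoll : h i' = h i <;> simp [hcoll]
    have := abs_le.mp (habs.trans hc2)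
    apply hh
    rw [hdec h]
    constructor <;> linarith [this.1, this.2]
  -- head part
  have hhead : ν (⋃ i' ∈ (Finset.univ.erase i).filter (fun i' => y i' ≠ 0),
      {h : Fin d → Fin m | h i' = h i}) ≤ (k : ℝ≥0∞) * (1 / m) := by
    refine (measure_biUnion_finset_le _ _).trans ?_
    have hcards : ((Finset.univ.erase i).filter (fun i' => y i' ≠ 0)).card ≤ k := by
      calc ((Finset.univ.erase i).filter (fun i' => y i' ≠ 0)).card
          ≤ (Finset.univ.filter (fun i' => y i' ≠ 0)).card :=
            Finset.card_le_card (fun j hj =>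
              Finset.mem_filter.2 ⟨Finset.mem_univ _, (Finset.mem_filter.1 hj).2⟩)
        _ ≤ k := by
            rwa [Set.ncard_eq_toFinset_card', Set.toFinset_setOf] at hycard
    calc ∑ i' ∈ (Finset.univ.erase i).filter (fun i' => y i' ≠ 0), ν {h | h i' = h i}
        = ∑ i' ∈ (Finset.univ.erase i).filter (fun i' => y i' ≠ 0), 1 / (m : ℝ≥0∞) := by
          refine Finset.sum_congr rfl fun i' hi' => ?_
          simp only [Finset.mem_filter, Finset.mem_erase] at hi'
          exact collision_prob hm0 ν hpair hi'.1.1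
      _ = ((Finset.univ.erase i).filter (fun i' => y i' ≠ 0)).card * (1 / (m : ℝ≥0∞)) := by
          rw [Finset.sum_const, nsmul_eq_mul]
      _ ≤ (k : ℝ≥0∞) * (1 / m) :=
          mul_le_mul_left (by exact_mod_cast hcards) _
  -- tail part (Markov)
  have hinner : ∀ i' : Fin d, i' ≠ i →
      (∑ h : Fin d → Fin m,
        ENNReal.ofReal (|x i' - y i'| * (if h i' = h i then 1 else 0)) * ν {h})
      = ENNReal.ofReal |x i' - y i'| * ν {h : Fin d → Fin m | h i' = h i} := by
    intro i' hi'
    calc (∑ h : Fin d → Fin m,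
          ENNReal.ofReal (|x i' - y i'| * (if h i' = h i then 1 else 0)) * ν {h})
        = ∑ h : Fin d → Fin m,
            (if h i' = h i then ENNReal.ofReal |x i' - y i'| * ν {h} else 0) := by
          refine Finset.sum_congr rfl fun h _ => ?_
          by_cases hcoll : h i' = h i <;> simp [hcoll]
      _ = ∑ h ∈ Finset.univ.filter (fun h : Fin d → Fin m => h i' = h i),
            ENNReal.ofReal |x i' - y i'| * ν {h} := (Finset.sum_filter _ _).symm
      _ = ENNReal.ofReal |x i' - y i'|
            * ∑ h ∈ Finset.univ.filter (fun h : Fin d → Fin m => h i' = h i), ν {h} :=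
          (Finset.mul_sum _ _ _).symm
      _ = ENNReal.ofReal |x i' - y i'| * ν {h : Fin d → Fin m | h i' = h i} := by
          rw [measure_setOf_eq_sum ν (fun h : Fin d → Fin m => h i' = h i)]
  have hmark : ENNReal.ofReal (ε * c) * ν {h : Fin d → Fin m | ε * c < T h}
      ≤ ENNReal.ofReal c * (1 / (m : ℝ≥0∞)) := by
    calc ENNReal.ofReal (ε * c) * ν {h : Fin d → Fin m | ε * c < T h}
        = ∑ h ∈ Finset.univ.filter (fun h : Fin d → Fin m => ε * c < T h),
            ENNReal.ofReal (ε * c) * ν {h} := by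
          rw [measure_setOf_eq_sum ν (fun h : Fin d → Fin m => ε * c < T h), Finset.mul_sum]
      _ ≤ ∑ h ∈ Finset.univ.filter (fun h : Fin d → Fin m => ε * c < T h),
            ENNReal.ofReal (T h) * ν {h} := by
          refine Finset.sum_le_sum fun h hh => ?_
          exact mul_le_mul_left
            (ENNReal.ofReal_le_ofReal (Finset.mem_filter.1 hh).2.le) _
      _ ≤ ∑ h : Fin d → Fin m, ENNReal.ofReal (T h) * ν {h} :=
          Finset.sum_le_sum_of_subset (Finset.filter_subset _ _)
      _ = ∑ h : Fin d → Fin m, ∑ i' ∈ Finset.univ.erase i,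
            ENNReal.ofReal (|x i' - y i'| * (if h i' = h i then 1 else 0)) * ν {h} := by
          refine Finset.sum_congr rfl fun h _ => ?_
          rw [hT, ENNReal.ofReal_sum_of_nonneg (fun i' _ => by positivity), Finset.sum_mul]
      _ = ∑ i' ∈ Finset.univ.erase i, ∑ h : Fin d → Fin m,
            ENNReal.ofReal (|x i' - y i'| * (if h i' = h i then 1 else 0)) * ν {h} :=
          Finset.sum_comm
      _ = ∑ i' ∈ Finset.univ.erase i,
            ENNReal.ofReal |x i' - y i'| * ν {h : Fin d → Fin m | h i' = h i} :=
          Finset.sum_congr rfl fun i' hi' => hinner i' (Finset.mem_erase.1 hi').1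
      _ = (∑ i' ∈ Finset.univ.erase i, ENNReal.ofReal |x i' - y i'|) * (1 / (m : ℝ≥0∞)) := by
          rw [Finset.sum_mul]
          refine Finset.sum_congr rfl fun i' hi' => ?_
          rw [collision_prob hm0 ν hpair (Finset.mem_erase.1 hi').1]
      _ ≤ ENNReal.ofReal c * (1 / (m : ℝ≥0∞)) := by
          refine mul_le_mul_left ?_ _
          rw [← ENNReal.ofReal_sum_of_nonneg (fun i' _ => abs_nonneg _)]
          refine ENNReal.ofReal_le_ofReal ?_
          exact le_trans (Finset.sum_le_sum_of_subset_of_nonneg (Finset.subset_univ _)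
            (fun _ _ _ => abs_nonneg _)) hyl1
  have htail : ν {h : Fin d → Fin m | ε * c < T h}
      ≤ ENNReal.ofReal (1 / ε) * (1 / (m : ℝ≥0∞)) := by
    have hz : ENNReal.ofReal (ε * c) ≠ 0 := by
      simp [ENNReal.ofReal_eq_zero, not_le, hεc]
    have hzt : ENNReal.ofReal (ε * c) ≠ ⊤ := ENNReal.ofReal_ne_top
    calc ν {h : Fin d → Fin m | ε * c < T h}
        = (ENNReal.ofReal (ε * c))⁻¹
            * (ENNReal.ofReal (ε * c) * ν {h : Fin d → Fin m | ε * c < T h}) := by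
          rw [← mul_assoc, ENNReal.inv_mul_cancel hz hzt, one_mul]
      _ ≤ (ENNReal.ofReal (ε * c))⁻¹ * (ENNReal.ofReal c * (1 / (m : ℝ≥0∞))) :=
          mul_le_mul_right hmark _
      _ = ENNReal.ofReal (1 / ε) * (1 / (m : ℝ≥0∞)) := by
          rw [← mul_assoc, mul_comm (ENNReal.ofReal (ε * c))⁻¹, ← div_eq_mul_inv,
            ← ENNReal.ofReal_div_of_pos hεc]
          congr 2
          field_simp
  -- combine
  calc ν {h | Dec (Sk h x) i h ∉ Set.Icc (x i - ε * c) (x i + ε * c)}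
      ≤ ν ((⋃ i' ∈ (Finset.univ.erase i).filter (fun i' => y i' ≠ 0),
            {h : Fin d → Fin m | h i' = h i}) ∪ {h | ε * c < T h}) := measure_mono hsub
    _ ≤ ν (⋃ i' ∈ (Finset.univ.erase i).filter (fun i' => y i' ≠ 0),
            {h : Fin d → Fin m | h i' = h i}) + ν {h | ε * c < T h} := measure_union_le _ _
    _ ≤ (k : ℝ≥0∞) * (1 / m) + ENNReal.ofReal (1 / ε) * (1 / (m : ℝ≥0∞)) :=
        add_le_add hhead htail
    _ ≤ ENNReal.ofReal ((k : ℝ) + 2 / ε) * (1 / (m : ℝ≥0∞)) := by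
        rw [← add_mul]
        refine mul_le_mul_left ?_ _
        rw [ENNReal.ofReal_add (by positivity) (by positivity), ENNReal.ofReal_natCast]
        refine add_le_add le_rfl (ENNReal.ofReal_le_ofReal ?_)
        exact (div_le_div_iff_of_pos_right hε).mpr one_le_two
    _ = ENNReal.ofReal (((k : ℝ) + 2 / ε) / m) := by
        rw [ENNReal.ofReal_div_of_pos (by exact_mod_cast hm0), ENNReal.ofReal_natCast,
          one_div]
        rfl

open Classical in
lemma count_ge_of_median_out {d m t : ℕ} (ht0 : 0 < t) (H : Fin t → Fin d → Fin m)
    (x : Fin d → ℝ) (i : Fin d) (a b : ℝ) (hmed : DecMed H x i ∉ Set.Icc a b) :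
    t - t / 2 ≤ (Finset.univ.filter
      (fun j => Dec (Sk (H j) x) i (H j) ∉ Set.Icc a b)).card := by
  classical
  set f : Fin t → ℝ := fun j => Dec (Sk (H j) x) i (H j) with hf
  set l : List ℝ := List.ofFn f with hl
  set s : List ℝ := l.mergeSort (fun p q => decide (p ≤ q)) with hs
  have hperm : s.Perm l := List.mergeSort_perm l _
  have hlen : s.length = t := by rw [hperm.length_eq, hl, List.length_ofFn]
  have hsorted : ∀ (j1 j2 : ℕ) (h1 : j1 < s.length) (h2 : j2 < s.length),
      j1 ≤ j2 → s[j1] ≤ s[j2] := by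
    have hp : List.Pairwise (fun p q : ℝ => p ≤ q) s := by
      have htot : ∀ p q : ℝ, (decide (p ≤ q) || decide (q ≤ p)) = true := by
        intro p q
        rcases le_total p q with h | h <;> simp [h]
      have htrans : ∀ p q r : ℝ, decide (p ≤ q) = true → decide (q ≤ r) = true →
          decide (p ≤ r) = true := by
        intro p q r h1 h2
        exact decide_eq_true (le_trans (of_decide_eq_true h1) (of_decide_eq_true h2))
      exact (List.pairwise_mergeSort htrans htot l).imp (fun h => of_decide_eq_true h)
    intro j1 j2 h1 h2 hle
    rcases eq_or_lt_of_le hle with h | h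
    · subst h; exact le_rfl
    · exact (List.pairwise_iff_getElem.1 hp) j1 j2 h1 h2 h
  have hidx : t / 2 < s.length := by omega
  have hmed' : s[t/2] ∉ Set.Icc a b := by
    have : DecMed H x i = s[t/2] := by
      rw [DecMed, List.getD_eq_getElem (hn := hidx)]
    rwa [this] at hmed
  -- the Bool predicate
  set p : ℝ → Bool := fun v => decide (v ∉ Set.Icc a b) with hp
  have hcard : (Finset.univ.filter
      (fun j => Dec (Sk (H j) x) i (H j) ∉ Set.Icc a b)).card = l.countP p := by
    rw [hl, ← card_filter_eq_countP_ofFn f p]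
    congr 1
    apply Finset.filter_congr
    intro j _
    simp only [hp, hf, decide_eq_true_eq]
  rw [hcard, ← hperm.countP_eq]
  by_cases hab : a ≤ s[t/2]
  · -- median above b
    have hb : b < s[t/2] := by
      by_contra hb
      exact hmed' ⟨hab, not_lt.mp hb⟩
    have hall : ∀ v ∈ s.drop (t/2), p v = true := by
      intro v hv
      obtain ⟨j, hj, hjv⟩ := List.mem_iff_getElem.1 hv
      rw [List.getElem_drop] at hjv
      have hjlt : t/2 + j < s.length := by
        rw [List.length_drop] at hj; omega
      have hle : s[t/2] ≤ s[t/2 + j] := hsorted _ _ hidx hjlt (Nat.le_add_right _ _)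
      rw [← hjv]
      simp only [hp, decide_eq_true_eq, Set.mem_Icc, not_and, not_le]
      intro _
      linarith
    calc t - t/2 = (s.drop (t/2)).length := by rw [List.length_drop, hlen]
      _ = (s.drop (t/2)).countP p := (List.countP_eq_length.2 hall).symm
      _ ≤ s.countP p := (List.drop_sublist _ _).countP_le
  · -- median below a
    have ha : s[t/2] < a := not_le.mp hab
    have hall : ∀ v ∈ s.take (t/2 + 1), p v = true := by
      intro v hv
      obtain ⟨j, hj, hjv⟩ := List.mem_iff_getElem.1 hv
      rw [List.getElem_take] at hjv
      have hjle : j ≤ t/2 := by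
        rw [List.length_take] at hj; omega
      have hjlt : j < s.length := by omega
      have hle : s[j] ≤ s[t/2] := hsorted _ _ hjlt hidx hjle
      rw [← hjv]
      simp only [hp, decide_eq_true_eq, Set.mem_Icc, not_and, not_le]
      intro hav
      linarith
    have hlt : (s.take (t/2 + 1)).length = t/2 + 1 := by
      rw [List.length_take]; omega
    calc t - t/2 ≤ t/2 + 1 := by omega
      _ = (s.take (t/2 + 1)).countP p := by rw [(List.countP_eq_length.2 hall), hlt]
      _ ≤ s.countP p := (List.take_sublist _ _).countP_le

/-- For `x ∈ ℝ_{d,k,c}`, `m ≥ 4e²·(k + 2/ε)`, and `t`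
independent pairwise-independent hashes, for every `i`,
`Pr[DecMed(Sk_{h_{1:t}}(x), i) ∉ [x i − ε·c, x i + ε·c]] ≤ e^{-t}`. -/
theorem decMed_interval_error_le_exp_neg_t
    (d k m t : ℕ) (hd : 0 < d) (hk : 0 < k) (hm0 : 0 < m) (ht0 : 0 < t)
    (c ε : ℝ) (hc : 0 < c) (hε : 0 < ε)
    (x : Fin d → ℝ) (hxtail : TailBound k c x)
    (μ : Fin t → Measure (Fin d → Fin m))
    (hprob : ∀ j, IsProbabilityMeasure (μ j))
    (hpair : ∀ j, PairwiseIndepHash (μ j))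
    (hm : 4 * Real.exp 1 ^ 2 * ((k : ℝ) + 2 / ε) ≤ (m : ℝ))
    (i : Fin d) :
    Measure.pi μ {H : Fin t → Fin d → Fin m |
        DecMed H x i ∉ Set.Icc (x i - ε * c) (x i + ε * c)}
      ≤ ENNReal.ofReal (Real.exp (-(t : ℝ))) := by
  classical
  obtain ⟨y, hycard, hyl1⟩ := hxtail
  haveI : ∀ j, SigmaFinite (μ j) := fun j => by haveI := hprob j; infer_instance
  set e1 : ℝ := Real.exp 1 with he1
  have he1pos : 0 < e1 := Real.exp_pos 1
  have he1ge : 1 ≤ e1 := Real.one_le_exp (by norm_num)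
  set B : Set (Fin d → Fin m) :=
    {h | Dec (Sk h x) i h ∉ Set.Icc (x i - ε * c) (x i + ε * c)} with hB
  set pb : ℝ≥0∞ := ENNReal.ofReal (1 / (2 * e1)) with hpb
  have hpb1 : pb ≤ 1 := ENNReal.ofReal_le_one.2
    (by rw [div_le_one (by positivity)]; linarith)
  have hBle : ∀ j, μ j B ≤ pb ^ 2 := by
    intro j
    haveI := hprob j
    refine (perhash hm0 c ε hc hε x y hycard hyl1 (μ j) (hpair j) i).trans ?_
    rw [hpb, ← ENNReal.ofReal_pow (by positivity)]
    refine ENNReal.ofReal_le_ofReal ?_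
    have hmpos : (0 : ℝ) < m := by exact_mod_cast hm0
    rw [div_pow, one_pow, div_le_div_iff₀ hmpos (by positivity)]
    calc ((k : ℝ) + 2 / ε) * (2 * e1) ^ 2 = 4 * e1 ^ 2 * ((k : ℝ) + 2 / ε) := by ring
      _ ≤ (m : ℝ) := hm
      _ = 1 * (m : ℝ) := (one_mul _).symm
  set r := t - t / 2 with hr
  have hsub : {H : Fin t → Fin d → Fin m |
        DecMed H x i ∉ Set.Icc (x i - ε * c) (x i + ε * c)} ⊆
      ⋃ S ∈ Finset.univ.powersetCard r,
        {H : Fin t → Fin d → Fin m | ∀ j ∈ S, H j ∈ B} := by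
    intro H hH
    have hcount := count_ge_of_median_out ht0 H x i _ _ hH
    obtain ⟨S, hS1, hS2⟩ := Finset.exists_subset_card_eq hcount
    refine Set.mem_iUnion₂.2 ⟨S, ?_, ?_⟩
    · exact Finset.mem_powersetCard.2 ⟨Finset.subset_univ _, hS2⟩
    · intro j hj
      exact (Finset.mem_filter.1 (hS1 hj)).2
  have hcyl : ∀ S : Finset (Fin t),
      Measure.pi μ {H : Fin t → Fin d → Fin m | ∀ j ∈ S, H j ∈ B}
        = ∏ j ∈ S, μ j B := by
    intro S
    have hset : {H : Fin t → Fin d → Fin m | ∀ j ∈ S, H j ∈ B}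
        = Set.pi Set.univ (fun j => if j ∈ S then B else Set.univ) := by
      ext H
      simp only [Set.mem_setOf_eq, Set.mem_pi, Set.mem_univ, true_implies]
      constructor
      · intro hH j
        by_cases hj : j ∈ S
        · simpa [hj] using hH j hj
        · simp [hj]
      · intro hH j hj
        have := hH j
        rwa [if_pos hj] at this
    rw [hset, Measure.pi_pi]
    calc (∏ j, μ j (if j ∈ S then B else Set.univ))
        = ∏ j, (if j ∈ S then μ j B else 1) := by
          refine Finset.prod_congr rfl fun j _ => ?_
          by_cases hj : j ∈ S
          · simp [hj]
          · haveI := hprob j; simp [hj]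
      _ = ∏ j ∈ Finset.univ ∩ S, μ j B := Finset.prod_ite_mem _ _ _
      _ = ∏ j ∈ S, μ j B := by rw [Finset.univ_inter]
  have hchoose : t.choose r ≤ 2 ^ t := by
    calc t.choose r ≤ ∑ n ∈ Finset.range (t + 1), t.choose n :=
        Finset.single_le_sum (fun n _ => Nat.zero_le _) (Finset.mem_range.2 (by omega))
      _ = 2 ^ t := Nat.sum_range_choose t
  calc Measure.pi μ {H : Fin t → Fin d → Fin m |
        DecMed H x i ∉ Set.Icc (x i - ε * c) (x i + ε * c)}
      ≤ Measure.pi μ (⋃ S ∈ Finset.univ.powersetCard r,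
          {H : Fin t → Fin d → Fin m | ∀ j ∈ S, H j ∈ B}) := measure_mono hsub
    _ ≤ ∑ S ∈ Finset.univ.powersetCard r,
          Measure.pi μ {H : Fin t → Fin d → Fin m | ∀ j ∈ S, H j ∈ B} :=
        measure_biUnion_finset_le _ _
    _ ≤ ∑ _S ∈ Finset.univ.powersetCard r, pb ^ (2 * r) := by
        refine Finset.sum_le_sum fun S hS => ?_
        rw [hcyl S]
        have hcard : S.card = r := (Finset.mem_powersetCard.1 hS).2
        calc (∏ j ∈ S, μ j B) ≤ ∏ _j ∈ S, pb ^ 2 :=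
            Finset.prod_le_prod' fun j _ => hBle j
          _ = (pb ^ 2) ^ r := by rw [Finset.prod_const, hcard]
          _ = pb ^ (2 * r) := by rw [← pow_mul]
    _ = ((Finset.univ.powersetCard r).card : ℝ≥0∞) * pb ^ (2 * r) := by
        rw [Finset.sum_const, nsmul_eq_mul]
    _ ≤ 2 ^ t * pb ^ t := by
        refine mul_le_mul' ?_ ?_
        · rw [Finset.card_powersetCard, Finset.card_univ, Fintype.card_fin]
          calc (t.choose r : ℝ≥0∞) ≤ ((2 ^ t : ℕ) : ℝ≥0∞) := Nat.cast_le.2 hchoose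
            _ = 2 ^ t := by push_cast; ring
        · exact pow_le_pow_of_le_one zero_le hpb1 (by omega)
    _ = (2 * pb) ^ t := by rw [mul_pow]
    _ = (ENNReal.ofReal (1 / e1)) ^ t := by
        congr 1
        rw [hpb, ← ENNReal.ofReal_ofNat 2, ← ENNReal.ofReal_mul (by norm_num)]
        congr 1
        field_simp
    _ = ENNReal.ofReal ((1 / e1) ^ t) := (ENNReal.ofReal_pow (by positivity) t).symm
    _ = ENNReal.ofReal (Real.exp (-(t : ℝ))) := by
        congr 1
        rw [one_div, he1, ← Real.exp_neg, ← Real.exp_nat_mul]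
        congr 1
        push_cast
        ring
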